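/- Up to overall sign, there are exactly four operators of the form β = π(q₁,q₂,λ,n) J π(q₁,q₂,λ,n)* J⁻¹ that commute with the represented reduced Pati-Salam algebra ℍ_R ⊕ ℍ_L ⊕ ℂ ⊕ M_3(ℂ), commute with J, are self-adjoint, and square to one. They are given by π(η₁1₂, η₂1₂, η₃, η₄1₃)Jπ(η₁1₂, η₂1₂, η₃, η₄1₃)J⁻¹ for sign choices (η₁,η₂,η₃,η₄) equal (up to global sign) to (1,1,1,1), (1,-1,1,1), (1,1,1,-1), and (-1,1,1,-1). -/

import Mathlib

noncomputable section
open Matrix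
open scoped ComplexConjugate

abbrev M2 : Type := Matrix (Fin 2) (Fin 2) ℂ
abbrev M3 : Type := Matrix (Fin 3) (Fin 3) ℂ
abbrev M4 : Type := Matrix (Fin 4) (Fin 4) ℂ
abbrev Idx : Type := Fin 4 × Fin 2 × Fin 4
abbrev M32 : Type := Matrix Idx Idx ℂ

/-- matrix unit `e_{ij}` -/
def eu {n : ℕ} (i j : Fin n) : Matrix (Fin n) (Fin n) ℂ := Matrix.single i j 1

/-- the element `A ⊗ E ⊗ B` of `M₄(ℂ) ⊗ M₂(ℂ) ⊗ M₄(ℂ)` realized as a matrix on `ℂ⁴ ⊗ ℂ² ⊗ ℂ⁴` -/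
def tp (A : M4) (E : M2) (B : M4) : M32 :=
  Matrix.of fun p q => A p.1 q.1 * E p.2.1 q.2.1 * B p.2.2 q.2.2

/-- a 4×4 matrix assembled from four 2×2 blocks -/
def bm (a b c d : M2) : M4 :=
  Matrix.reindex finSumFinEquiv finSumFinEquiv (Matrix.fromBlocks a b c d)

/-- block-diagonal `diag(a, b)` with 2×2 blocks -/
def diag22 (a b : M2) : M4 := bm a 0 0 b

/-- block-diagonal `diag(l, n)` with a scalar and a 3×3 block -/
def diag13 (l : ℂ) (n : M3) : M4 :=
  Matrix.reindex finSumFinEquiv finSumFinEquiv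
    (Matrix.fromBlocks (Matrix.diagonal fun _ : Fin 1 => l) 0 0 n)

/-- the standard embedding of the quaternions into `M₂(ℂ)` -/
def IsQuat (q : M2) : Prop := ∃ x y : ℂ, q = !![x, y; -(conj y), conj x]

/-- the Hilbert space `ℂ⁴ ⊗ ℂ² ⊗ ℂ⁴ ≅ M₄(ℂ) ⊕ M₄(ℂ)` -/
abbrev HSp : Type := Idx → ℂ

/-- index swap underlying the real structure `J` -/
def sw (p : Idx) : Idx := (p.2.2, if p.2.1 = 0 then 1 else 0, p.1)

/-- the antilinear real structure `J[v;w] = [w*;v*]` -/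
noncomputable def Jr (ψ : HSp) : HSp := fun p => conj (ψ (sw p))

/-- action of an operator on the Hilbert space -/
def act (X : M32) (ψ : HSp) : HSp := X.mulVec ψ

/-- conjugation `X ↦ J X J⁻¹` by the real structure, at the matrix level -/
noncomputable def Jconj (X : M32) : M32 := Matrix.of fun p q => conj (X (sw p) (sw q))

/-- the opposite-algebra element `J X* J⁻¹` -/
noncomputable def opp (X : M32) : M32 := Jconj Xᴴ

/-- representation of the (unreduced) Pati–Salam algebra `ℍ_R ⊕ ℍ_L ⊕ M₄(ℂ)` -/
def piPS (q₁ q₂ : M2) (m : M4) : M32 :=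
  tp (diag22 q₁ q₂) (eu 0 0) 1 + tp m (eu 1 1) 1

/-- representation of the reduced Pati–Salam algebra `ℍ_R ⊕ ℍ_L ⊕ ℂ ⊕ M₃(ℂ)` -/
def piRed (q₁ q₂ : M2) (l : ℂ) (n : M3) : M32 := piPS q₁ q₂ (diag13 l n)

/-- the grading γ -/
def gam : M32 := tp (diag22 1 (-1)) (eu 0 0) 1 + tp 1 (eu 1 1) (diag22 (-1) 1)

/-- the grading γ⋆ -/
def gamStar : M32 :=
  tp (diag22 1 (-1)) (eu 0 0) (diag13 1 (-1)) + tp (diag13 (-1) 1) (eu 1 1) (diag22 1 (-1))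

/-- the nontrivial β for the unreduced model -/
def betaPS : M32 := tp (diag22 1 (-1)) (eu 0 0) 1 + tp 1 (eu 1 1) (diag22 1 (-1))

/-!
Write `π(a) = D ⊕ L` for the action of an algebra element on `H = M₄(ℂ) ⊕ M₄(ℂ)`. Then
`β = π(a) J π(a)* J⁻¹ = D ⊗ Lᵀ ⊕ L ⊗ Dᵀ`. Since `β² = 1` forces `D ≠ 0 ≠ L`, a Kronecker
cancellation shows that `β` commutes with the algebra exactly when `D` commutes with `diag(ℍ, ℍ)`
and `L` with `ℂ ⊕ M₃(ℂ)`; hence `q₁, q₂, n` are scalars. As `β` is unchanged under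
`(D, L) ↦ (tD, t⁻¹L)`, one may take `λ = 1`, and then `β² = 1` says exactly that the remaining
three scalars are signs. For signs, self-adjointness and `JβJ⁻¹ = β` are automatic.
-/

open scoped Kronecker

namespace Matrix

variable {α l m n p : Type*}

theorem kronecker_ne_zero [MulZeroClass α] [NoZeroDivisors α] {A : Matrix l m α}
    {B : Matrix n p α} (hA : A ≠ 0) (hB : B ≠ 0) : A ⊗ₖ B ≠ 0 := by
  obtain ⟨i, j, hij⟩ : ∃ i j, A i j ≠ 0 := by simpa [← Matrix.ext_iff] using hA
  obtain ⟨k, k', hk⟩ : ∃ k k', B k k' ≠ 0 := by simpa [← Matrix.ext_iff] using hB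
  intro h
  exact mul_ne_zero hij hk (by simpa using congr($h (i, k) (j, k')))

theorem kronecker_left_injective [MulZeroClass α] [IsRightCancelMulZero α] {B : Matrix n p α}
    (hB : B ≠ 0) : Function.Injective fun A : Matrix l m α => A ⊗ₖ B := by
  obtain ⟨k, k', hk⟩ : ∃ k k', B k k' ≠ 0 := by simpa [← Matrix.ext_iff] using hB
  intro A A' h
  ext i j
  exact mul_right_cancel₀ hk (by simpa using congr($h (i, k) (j, k')))

end Matrix

section TensorCalculus

lemma tp_eq_kronecker (A : M4) (E : M2) (B : M4) : tp A E B = A ⊗ₖ (E ⊗ₖ B) := by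
  ext; simp [tp, mul_assoc]

lemma tp_mul (A A' : M4) (E E' : M2) (B B' : M4) :
    tp A E B * tp A' E' B' = tp (A * A') (E * E') (B * B') := by
  simp only [tp_eq_kronecker, mul_kronecker_mul]

lemma tp_conjTranspose (A : M4) (E : M2) (B : M4) : (tp A E B)ᴴ = tp Aᴴ Eᴴ Bᴴ := by
  simp only [tp_eq_kronecker, conjTranspose_kronecker]

lemma tp_zero_left (E : M2) (B : M4) : tp 0 E B = 0 := by
  simp [tp_eq_kronecker]

lemma tp_zero_middle (A B : M4) : tp A 0 B = 0 := by
  simp [tp_eq_kronecker]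

lemma tp_zero_right (A : M4) (E : M2) : tp A E 0 = 0 := by
  simp [tp_eq_kronecker]

lemma tp_smul_left (t : ℂ) (A : M4) (E : M2) (B : M4) : tp (t • A) E B = t • tp A E B := by
  simp [tp_eq_kronecker, smul_kronecker]

lemma tp_smul_right (t : ℂ) (A : M4) (E : M2) (B : M4) : tp A E (t • B) = t • tp A E B := by
  simp [tp_eq_kronecker, kronecker_smul]

lemma tp_one : tp 1 1 1 = 1 := by
  simp [tp_eq_kronecker]

lemma eu_mul_eu_self {n : ℕ} (i : Fin n) : eu i i * eu i i = eu i i := by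
  simp [eu]

lemma eu_mul_eu_of_ne {n : ℕ} {i j : Fin n} (h : i ≠ j) : eu i i * eu j j = 0 := by
  simp [eu, h]

lemma eu_ne_zero {n : ℕ} (i : Fin n) : eu i i ≠ 0 := fun h =>
  one_ne_zero (α := ℂ) (by simpa [eu] using congr_fun (congr_fun h i) i)

lemma eu_conjTranspose {n : ℕ} (i : Fin n) : (eu i i)ᴴ = eu i i := by
  simp [eu]

lemma eu_zero_add_eu_one : eu 0 0 + eu 1 1 = (1 : M2) := by
  ext i j; fin_cases i <;> fin_cases j <;> simp [eu]

lemma Jconj_add (X Y : M32) : Jconj (X + Y) = Jconj X + Jconj Y := by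
  ext; simp [Jconj]

lemma Jconj_tp_eu_zero (A B : M4) :
    Jconj (tp A (eu 0 0) B) = tp (B.map star) (eu 1 1) (A.map star) := by
  ext ⟨a, j, b⟩ ⟨c, j', d⟩
  fin_cases j <;> fin_cases j' <;> simp [Jconj, tp, sw, eu, mul_comm]

lemma Jconj_tp_eu_one (A B : M4) :
    Jconj (tp A (eu 1 1) B) = tp (B.map star) (eu 0 0) (A.map star) := by
  ext ⟨a, j, b⟩ ⟨c, j', d⟩
  fin_cases j <;> fin_cases j' <;> simp [Jconj, tp, sw, eu, mul_comm]

lemma tp_eu_sum_mul (A B C E A' B' C' E' : M4) :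
    (tp A (eu 0 0) B + tp C (eu 1 1) E) * (tp A' (eu 0 0) B' + tp C' (eu 1 1) E') =
      tp (A * A') (eu 0 0) (B * B') + tp (C * C') (eu 1 1) (E * E') := by
  simp [add_mul, mul_add, tp_mul, eu_mul_eu_self, eu_mul_eu_of_ne, tp_zero_middle]

lemma tp_eu_left_injective (i : Fin 2) {B : M4} (hB : B ≠ 0) {A A' : M4}
    (h : tp A (eu i i) B = tp A' (eu i i) B) : A = A' :=
  kronecker_left_injective (kronecker_ne_zero (eu_ne_zero i) hB)
    (by simpa only [tp_eq_kronecker] using h)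

end TensorCalculus

/-- The left action of `(D, L) ∈ M₄(ℂ) ⊕ M₄(ℂ)` on `H`; `piPS` and `piRed` are of this form. -/
def leftAct (D L : M4) : M32 := tp D (eu 0 0) 1 + tp L (eu 1 1) 1

/-- `π J π* J⁻¹` for `π = leftAct D L`, see `leftAct_mul_opp`. -/
def betaOp (D L : M4) : M32 := tp D (eu 0 0) Lᵀ + tp L (eu 1 1) Dᵀ

section BetaOp

lemma opp_leftAct (D L : M4) : opp (leftAct D L) = tp 1 (eu 0 0) Lᵀ + tp 1 (eu 1 1) Dᵀ := by
  simp only [opp, leftAct, conjTranspose_add, tp_conjTranspose, eu_conjTranspose, Jconj_add,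
    Jconj_tp_eu_zero, Jconj_tp_eu_one, conjTranspose_one]
  rw [add_comm]
  congr 2 <;> ext <;> simp [one_apply, apply_ite]

lemma leftAct_mul_opp (D L : M4) : leftAct D L * opp (leftAct D L) = betaOp D L := by
  rw [opp_leftAct, leftAct, tp_eu_sum_mul]
  simp [betaOp]

lemma betaOp_mul_leftAct (D L P Q : M4) :
    betaOp D L * leftAct P Q = tp (D * P) (eu 0 0) Lᵀ + tp (L * Q) (eu 1 1) Dᵀ := by
  rw [betaOp, leftAct, tp_eu_sum_mul]
  simp

lemma leftAct_mul_betaOp (D L P Q : M4) :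
    leftAct P Q * betaOp D L = tp (P * D) (eu 0 0) Lᵀ + tp (Q * L) (eu 1 1) Dᵀ := by
  rw [betaOp, leftAct, tp_eu_sum_mul]
  simp

lemma betaOp_mul_self (D L : M4) : betaOp D L * betaOp D L = betaOp (D * D) (L * L) := by
  rw [betaOp, tp_eu_sum_mul, betaOp, transpose_mul, transpose_mul]

lemma betaOp_one_one : betaOp 1 1 = 1 := by
  rw [betaOp, transpose_one, ← tp_one, ← eu_zero_add_eu_one]
  simp [tp_eq_kronecker, kronecker_add, add_kronecker]

lemma Jconj_betaOp (D L : M4) : Jconj (betaOp D L) = betaOp Dᴴ Lᴴ := by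
  rw [betaOp, Jconj_add, Jconj_tp_eu_zero, Jconj_tp_eu_one, betaOp, add_comm]
  rfl

lemma betaOp_conjTranspose (D L : M4) : (betaOp D L)ᴴ = betaOp Dᴴ Lᴴ := by
  simp only [betaOp, conjTranspose_add, tp_conjTranspose, eu_conjTranspose,
    transpose_conjTranspose, conjTranspose_transpose]

lemma betaOp_smul_left (t : ℂ) (D L : M4) : betaOp (t • D) L = t • betaOp D L := by
  simp only [betaOp, transpose_smul, tp_smul_left, tp_smul_right, smul_add]

lemma betaOp_smul_right (t : ℂ) (D L : M4) : betaOp D (t • L) = t • betaOp D L := by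
  simp only [betaOp, transpose_smul, tp_smul_left, tp_smul_right, smul_add]

lemma neg_betaOp (D L : M4) : -betaOp D L = betaOp (-D) L := by
  rw [← neg_one_smul ℂ D, betaOp_smul_left, neg_one_smul]

lemma betaOp_apply_zero (D L : M4) (a b c d : Fin 4) :
    betaOp D L (a, 0, b) (c, 0, d) = D a c * L d b := by
  simp [betaOp, tp, eu]

lemma ne_zero_of_betaOp_mul_self_eq_one {D L : M4} (h : betaOp D L * betaOp D L = 1) :
    D ≠ 0 ∧ L ≠ 0 := by
  constructor <;> rintro rfl <;> simp [betaOp, tp_zero_left, tp_zero_right] at h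

lemma tp_eu_sum_inj {A B C E A' B' C' E' : M4}
    (h : tp A (eu 0 0) B + tp C (eu 1 1) E = tp A' (eu 0 0) B' + tp C' (eu 1 1) E') :
    tp A (eu 0 0) B = tp A' (eu 0 0) B' ∧ tp C (eu 1 1) E = tp C' (eu 1 1) E' := by
  -- `leftAct 1 0` and `leftAct 0 1` are the projections onto the two summands of `H`
  have h₀ := congr(leftAct 1 0 * $h)
  have h₁ := congr(leftAct 0 1 * $h)
  rw [leftAct, tp_eu_sum_mul, tp_eu_sum_mul] at h₀
  rw [leftAct, tp_eu_sum_mul, tp_eu_sum_mul] at h₁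
  simp only [zero_mul, tp_zero_left, add_zero, zero_add, one_mul] at h₀ h₁
  exact ⟨h₀, h₁⟩

lemma commute_betaOp_leftAct_iff {D L : M4} (hD : D ≠ 0) (hL : L ≠ 0) {P Q : M4} :
    Commute (betaOp D L) (leftAct P Q) ↔ Commute D P ∧ Commute L Q := by
  rw [Commute, SemiconjBy, betaOp_mul_leftAct, leftAct_mul_betaOp]
  constructor
  · intro h
    obtain ⟨h₀, h₁⟩ := tp_eu_sum_inj h
    exact ⟨tp_eu_left_injective 0 (transpose_eq_zero.not.mpr hL) h₀,
      tp_eu_left_injective 1 (transpose_eq_zero.not.mpr hD) h₁⟩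
  · rintro ⟨hP, hQ⟩
    rw [hP.eq, hQ.eq]

end BetaOp
section BlockDiagonal

lemma diag22_eq_reindexAlgEquiv (a b : M2) :
    diag22 a b = reindexAlgEquiv ℂ ℂ finSumFinEquiv (fromBlocks a 0 0 b) := rfl

lemma diag13_eq_reindexAlgEquiv (l : ℂ) (n : M3) :
    diag13 l n = reindexAlgEquiv ℂ ℂ finSumFinEquiv (fromBlocks (l • 1) 0 0 n) := by
  rw [smul_one_eq_diagonal]; rfl

lemma diag22_apply_zero_zero (a b : M2) : diag22 a b 0 0 = a 0 0 := rfl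

lemma diag22_apply_two_two (a b : M2) : diag22 a b 2 2 = b 0 0 := rfl

lemma diag13_apply_zero_zero (l : ℂ) (n : M3) : diag13 l n 0 0 = l := rfl

lemma diag13_apply_one_one (l : ℂ) (n : M3) : diag13 l n 1 1 = n 0 0 := rfl

lemma diag22_mul (a b c d : M2) : diag22 a b * diag22 c d = diag22 (a * c) (b * d) := by
  simp only [diag22_eq_reindexAlgEquiv, ← map_mul, fromBlocks_multiply]
  simp

lemma diag13_mul (l μ : ℂ) (n ν : M3) : diag13 l n * diag13 μ ν = diag13 (l * μ) (n * ν) := by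
  simp only [diag13_eq_reindexAlgEquiv, ← map_mul, fromBlocks_multiply]
  simp [smul_smul, mul_comm]

lemma diag22_inj {a b c d : M2} : diag22 a b = diag22 c d ↔ a = c ∧ b = d := by
  simp only [diag22_eq_reindexAlgEquiv, EquivLike.apply_eq_iff_eq, fromBlocks_inj]
  simp

lemma diag13_inj {l μ : ℂ} {n ν : M3} : diag13 l n = diag13 μ ν ↔ l = μ ∧ n = ν := by
  simp only [diag13_eq_reindexAlgEquiv, EquivLike.apply_eq_iff_eq, fromBlocks_inj]
  simp [(smul_left_injective ℂ (one_ne_zero (α := Matrix (Fin 1) (Fin 1) ℂ))).eq_iff]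

lemma commute_diag22_iff {a b c d : M2} :
    Commute (diag22 a b) (diag22 c d) ↔ Commute a c ∧ Commute b d := by
  simp only [Commute, SemiconjBy, diag22_mul, diag22_inj]

lemma commute_diag13_iff {l μ : ℂ} {n ν : M3} :
    Commute (diag13 l n) (diag13 μ ν) ↔ Commute n ν := by
  simp only [Commute, SemiconjBy, diag13_mul, diag13_inj, mul_comm l μ, true_and]

lemma diag22_one : diag22 1 1 = 1 := by
  simp [diag22_eq_reindexAlgEquiv]

lemma diag13_one : diag13 1 1 = 1 := by
  simp [diag13_eq_reindexAlgEquiv]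

lemma diag22_conjTranspose (a b : M2) : (diag22 a b)ᴴ = diag22 aᴴ bᴴ := by
  simp [diag22_eq_reindexAlgEquiv, coe_reindexAlgEquiv, fromBlocks_conjTranspose]

lemma diag13_conjTranspose (l : ℂ) (n : M3) : (diag13 l n)ᴴ = diag13 (star l) nᴴ := by
  simp [diag13_eq_reindexAlgEquiv, coe_reindexAlgEquiv, fromBlocks_conjTranspose]

lemma smul_diag22 (t : ℂ) (a b : M2) : t • diag22 a b = diag22 (t • a) (t • b) := by
  rw [diag22_eq_reindexAlgEquiv, diag22_eq_reindexAlgEquiv, ← map_smul, fromBlocks_smul,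
    smul_zero]

lemma smul_diag13 (t l : ℂ) (n : M3) : t • diag13 l n = diag13 (t * l) (t • n) := by
  rw [diag13_eq_reindexAlgEquiv, diag13_eq_reindexAlgEquiv, ← map_smul, fromBlocks_smul,
    smul_zero, smul_zero, smul_smul]

lemma neg_diag22 (a b : M2) : -diag22 a b = diag22 (-a) (-b) := by
  simpa using smul_diag22 (-1) a b

end BlockDiagonal

section Quaternions

lemma isQuat_smul_one {x : ℂ} (hx : conj x = x) : IsQuat (x • 1) :=
  ⟨x, 0, by ext i j; fin_cases i <;> fin_cases j <;> simp [hx]⟩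

lemma IsQuat.exists_eq_smul_one_of_commute {q : M2} (hq : IsQuat q)
    (h : ∀ p, IsQuat p → Commute q p) : ∃ x : ℂ, q = x • 1 := by
  obtain ⟨x, y, rfl⟩ := hq
  have hi : -(y * Complex.I) = Complex.I * y := by
    simpa [mul_apply, Fin.sum_univ_two] using
      congr_fun (congr_fun (h !![Complex.I, 0; -conj 0, conj Complex.I] ⟨_, _, rfl⟩).eq 0) 1
  have hx : x = conj x := by
    simpa [mul_apply, Fin.sum_univ_two] using
      congr_fun (congr_fun (h !![0, 1; -conj 1, conj 0] ⟨_, _, rfl⟩).eq 0) 1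
  have hy : y = 0 := by
    simpa using (mul_eq_zero.1 (by linear_combination -hi : (2 * Complex.I) * y = 0))
  refine ⟨x, ?_⟩
  ext i j
  fin_cases i <;> fin_cases j <;> simp [hy, ← hx]

end Quaternions

section Classification

def IsReducedBeta (β : M32) : Prop :=
  (∃ (q₁ q₂ : M2) (l : ℂ) (n : M3), IsQuat q₁ ∧ IsQuat q₂ ∧
      β = piRed q₁ q₂ l n * opp (piRed q₁ q₂ l n)) ∧
    (∀ (p₁ p₂ : M2) (μ : ℂ) (ν : M3), IsQuat p₁ → IsQuat p₂ →
      β * piRed p₁ p₂ μ ν = piRed p₁ p₂ μ ν * β) ∧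
    Jconj β = β ∧ βᴴ = β ∧ β * β = 1

/-- `β` for `π(η₁1₂, η₂1₂, η₃, η₄1₃)` after the rescaling `η₃ = 1`, see `betaOp_smul_left`. -/
def signBeta (a b d : ℂ) : M32 := betaOp (diag22 (a • 1) (b • 1)) (diag13 1 (d • 1))

lemma piRed_mul_opp (q₁ q₂ : M2) (l : ℂ) (n : M3) :
    piRed q₁ q₂ l n * opp (piRed q₁ q₂ l n) = betaOp (diag22 q₁ q₂) (diag13 l n) :=
  leftAct_mul_opp _ _

lemma exists_signBeta_eq_of_mul_self_eq_one {x₁ x₂ l c : ℂ}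
    (h : betaOp (diag22 (x₁ • 1) (x₂ • 1)) (diag13 l (c • 1)) *
      betaOp (diag22 (x₁ • 1) (x₂ • 1)) (diag13 l (c • 1)) = 1) :
    ∃ a b d : ℂ, (a = 1 ∨ a = -1) ∧ (b = 1 ∨ b = -1) ∧ (d = 1 ∨ d = -1) ∧
      betaOp (diag22 (x₁ • 1) (x₂ • 1)) (diag13 l (c • 1)) = signBeta a b d := by
  rw [betaOp_mul_self, diag22_mul, diag13_mul] at h
  have entry (b d : Fin 4) := congr_fun (congr_fun h (b, 0, d)) (b, 0, d)
  have e₁ : x₁ * x₁ * (l * l) = 1 := by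
    simpa [betaOp_apply_zero, diag22_apply_zero_zero, diag13_apply_zero_zero] using entry 0 0
  have e₂ : x₁ * x₁ * (c * c) = 1 := by
    simpa [betaOp_apply_zero, diag22_apply_zero_zero, diag13_apply_one_one] using entry 0 1
  have e₃ : x₂ * x₂ * (l * l) = 1 := by
    simpa [betaOp_apply_zero, diag22_apply_two_two, diag13_apply_zero_zero] using entry 2 0
  have hl : l ≠ 0 := by rintro rfl; simp at e₁
  refine ⟨x₁ * l, x₂ * l, c / l, mul_self_eq_one_iff.1 (by linear_combination e₁),
    mul_self_eq_one_iff.1 (by linear_combination e₃), mul_self_eq_one_iff.1 ?_, ?_⟩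
  · field_simp
    linear_combination (l * l) * e₂ - (c * c) * e₁
  · rw [signBeta, mul_comm x₁, mul_comm x₂, ← smul_smul, ← smul_smul, ← smul_diag22,
      betaOp_smul_left, ← betaOp_smul_right, smul_diag13, mul_one, smul_smul, mul_div_cancel₀ _ hl]

lemma exists_signBeta_eq_of_isReducedBeta {β : M32} (hβ : IsReducedBeta β) :
    ∃ a b d : ℂ, (a = 1 ∨ a = -1) ∧ (b = 1 ∨ b = -1) ∧ (d = 1 ∨ d = -1) ∧
      β = signBeta a b d := by
  obtain ⟨⟨q₁, q₂, l, n, hq₁, hq₂, rfl⟩, hcomm, -, -, hsq⟩ := hβ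
  rw [piRed_mul_opp] at hcomm hsq ⊢
  obtain ⟨hD, hL⟩ := ne_zero_of_betaOp_mul_self_eq_one hsq
  have hcomm' (p₁ p₂ : M2) (μ : ℂ) (ν : M3) (h₁ : IsQuat p₁) (h₂ : IsQuat p₂) :
      Commute (diag22 q₁ q₂) (diag22 p₁ p₂) ∧ Commute (diag13 l n) (diag13 μ ν) :=
    (commute_betaOp_leftAct_iff hD hL).1 (hcomm p₁ p₂ μ ν h₁ h₂)
  obtain ⟨x₁, rfl⟩ := hq₁.exists_eq_smul_one_of_commute fun p hp =>
    (commute_diag22_iff.1 (hcomm' p q₂ l n hp hq₂).1).1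
  obtain ⟨x₂, rfl⟩ := hq₂.exists_eq_smul_one_of_commute fun p hp =>
    (commute_diag22_iff.1 (hcomm' (x₁ • 1) p l n hq₁ hp).1).2
  obtain ⟨c, rfl⟩ : ∃ c : ℂ, n = c • 1 := by
    obtain ⟨c, hc⟩ := mem_range_scalar_of_commute_single fun i j _ =>
      (commute_diag13_iff.1 (hcomm' (x₁ • 1) (x₂ • 1) l (eu i j) hq₁ hq₂).2).symm
    exact ⟨c, by rw [← hc, scalar_apply, smul_one_eq_diagonal]⟩
  exact exists_signBeta_eq_of_mul_self_eq_one hsq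

lemma isReducedBeta_signBeta {a b d : ℂ} (ha : a = 1 ∨ a = -1) (hb : b = 1 ∨ b = -1)
    (hd : d = 1 ∨ d = -1) : IsReducedBeta (signBeta a b d) := by
  have sign {t : ℂ} (ht : t = 1 ∨ t = -1) : conj t = t ∧ t • (1 : M2) * t • 1 = 1 ∧
      t • (1 : M3) * t • 1 = 1 := by
    rcases ht with rfl | rfl <;> simp
  have hD : (diag22 (a • 1) (b • 1))ᴴ = diag22 (a • 1) (b • 1) := by
    simp [diag22_conjTranspose, (sign ha).1, (sign hb).1]
  have hL : (diag13 1 (d • 1))ᴴ = diag13 1 (d • 1) := by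
    simp [diag13_conjTranspose, (sign hd).1]
  have hsq : signBeta a b d * signBeta a b d = 1 := by
    rw [signBeta, betaOp_mul_self, diag22_mul, diag13_mul, (sign ha).2.1, (sign hb).2.1,
      (sign hd).2.2, mul_one, diag22_one, diag13_one, betaOp_one_one]
  obtain ⟨hD0, hL0⟩ := ne_zero_of_betaOp_mul_self_eq_one hsq
  refine ⟨⟨a • 1, b • 1, 1, d • 1, isQuat_smul_one (sign ha).1, isQuat_smul_one (sign hb).1,
    (piRed_mul_opp _ _ _ _).symm⟩, fun p₁ p₂ μ ν _ _ => ?_,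
    by rw [signBeta, Jconj_betaOp, hD, hL], by rw [signBeta, betaOp_conjTranspose, hD, hL], hsq⟩
  exact (commute_betaOp_leftAct_iff hD0 hL0).2
    ⟨commute_diag22_iff.2 ⟨(Commute.one_left _).smul_left _, (Commute.one_left _).smul_left _⟩,
      commute_diag13_iff.2 ((Commute.one_left _).smul_left _)⟩

theorem isReducedBeta_iff {β : M32} :
    IsReducedBeta β ↔ ∃ a b d : ℂ, (a = 1 ∨ a = -1) ∧ (b = 1 ∨ b = -1) ∧ (d = 1 ∨ d = -1) ∧
      β = signBeta a b d :=
  ⟨exists_signBeta_eq_of_isReducedBeta, by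
    rintro ⟨a, b, d, ha, hb, hd, rfl⟩
    exact isReducedBeta_signBeta ha hb hd⟩

end Classification

/-- Up to overall sign there are exactly four operators of the form
`β = π(q₁,q₂,λ,n) J π(q₁,q₂,λ,n)* J⁻¹` commuting with the represented reduced
Pati–Salam algebra and with `J`, self-adjoint and squaring to `1`; they are given
by the sign tuples `(1,1,1,1)`, `(1,-1,1,1)`, `(1,1,1,-1)` and `(-1,1,1,-1)`. -/
theorem beta_reduced_classification :
    (∀ β : M32,
      ((∃ (q₁ q₂ : M2) (l : ℂ) (n : M3), IsQuat q₁ ∧ IsQuat q₂ ∧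
          β = piRed q₁ q₂ l n * opp (piRed q₁ q₂ l n)) ∧
        (∀ (p₁ p₂ : M2) (μ : ℂ) (ν : M3), IsQuat p₁ → IsQuat p₂ →
          β * piRed p₁ p₂ μ ν = piRed p₁ p₂ μ ν * β) ∧
        Jconj β = β ∧ βᴴ = β ∧ β * β = 1) ↔
      (β = piRed 1 1 1 1 * opp (piRed 1 1 1 1) ∨
       β = -(piRed 1 1 1 1 * opp (piRed 1 1 1 1)) ∨
       β = piRed 1 (-1) 1 1 * opp (piRed 1 (-1) 1 1) ∨
       β = -(piRed 1 (-1) 1 1 * opp (piRed 1 (-1) 1 1)) ∨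
       β = piRed 1 1 1 (-1) * opp (piRed 1 1 1 (-1)) ∨
       β = -(piRed 1 1 1 (-1) * opp (piRed 1 1 1 (-1))) ∨
       β = piRed (-1) 1 1 (-1) * opp (piRed (-1) 1 1 (-1)) ∨
       β = -(piRed (-1) 1 1 (-1) * opp (piRed (-1) 1 1 (-1))))) ∧
    List.Nodup
      [piRed 1 1 1 1 * opp (piRed 1 1 1 1),
       piRed 1 (-1) 1 1 * opp (piRed 1 (-1) 1 1),
       piRed 1 1 1 (-1) * opp (piRed 1 1 1 (-1)),
       piRed (-1) 1 1 (-1) * opp (piRed (-1) 1 1 (-1)),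
       -(piRed 1 1 1 1 * opp (piRed 1 1 1 1)),
       -(piRed 1 (-1) 1 1 * opp (piRed 1 (-1) 1 1)),
       -(piRed 1 1 1 (-1) * opp (piRed 1 1 1 (-1))),
       -(piRed (-1) 1 1 (-1) * opp (piRed (-1) 1 1 (-1)))] := by
  refine ⟨fun β => ?_, ?_⟩
  · change IsReducedBeta β ↔ _
    rw [isReducedBeta_iff]
    simp only [exists_and_left, or_and_right, exists_or, exists_eq_left, signBeta, piRed_mul_opp,
      neg_betaOp, neg_diag22, neg_neg, one_smul, neg_smul]
    constructor
    · rintro (((h | h) | h | h) | (h | h) | h | h) <;> simp only [h, true_or, or_true]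
    · rintro (h | h | h | h | h | h | h | h) <;> simp only [h, true_or, or_true]
  · simp only [piRed_mul_opp, neg_betaOp, neg_diag22, neg_neg]
    refine List.Nodup.of_map
      (fun M : M32 => (M (0, 0, 0) (0, 0, 0), M (0, 0, 1) (0, 0, 1), M (2, 0, 0) (2, 0, 0))) ?_
    norm_num [betaOp_apply_zero, diag22_apply_zero_zero, diag22_apply_two_two,
      diag13_apply_zero_zero, diag13_apply_one_one]
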